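/- arXiv:1508.05990 — 3 statements merged into one kernel-verified Lean document; each statement's English description precedes it below -/
import Mathlib

section
/- Let K^f be the generator of a continuous-time Markov chain on n states (off-diagonal entries nonnegative, columns summing to zero) with semisimple zero eigenvalue of multiplicity n_f. Let Π be an n×n_f matrix whose columns are nonnegative right null vectors of K^f each with entries summing to 1, and let L be an n_f×n matrix of left null vectors of K^f with L Π = I_{n_f}, all entries of L nonnegative, and each column of L summing to 1. If K^s is any n×n Markov generator (off-diagonal entries nonnegative, columns summing to zero), then K̃ = L K^s Π is the generator of a Markov chain on n_f states: its off-diagonal entries are nonnegative and each of its columns sums to zero. -/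
theorem reduced_generator_is_markov (n nf : ℕ)
    (Kf Ks : Matrix (Fin n) (Fin n) ℝ)
    (Pi : Matrix (Fin n) (Fin nf) ℝ) (L : Matrix (Fin nf) (Fin n) ℝ)
    -- K^f is a Markov generator
    (hKf_off : ∀ i j, i ≠ j → 0 ≤ Kf i j)
    (hKf_col : ∀ j, ∑ i, Kf i j = 0)
    -- zero is a semisimple eigenvalue of K^f of multiplicity nf
    (hsemi : LinearMap.ker (Kf * Kf).mulVecLin = LinearMap.ker Kf.mulVecLin)
    (hmult : Module.finrank ℝ (LinearMap.ker Kf.mulVecLin) = nf)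
    -- columns of Pi are right null vectors of K^f, nonnegative, summing to one
    (hPinull : Kf * Pi = 0)
    (hPinonneg : ∀ i j, 0 ≤ Pi i j)
    (hPicol : ∀ j, ∑ i, Pi i j = 1)
    -- rows of L are left null vectors of K^f, L nonnegative, columns of L sum to one
    (hLnull : L * Kf = 0)
    (hLnonneg : ∀ i j, 0 ≤ L i j)
    (hLcol : ∀ j, ∑ i, L i j = 1)
    (hLPi : L * Pi = 1)
    -- K^s is a Markov generator
    (hKs_off : ∀ i j, i ≠ j → 0 ≤ Ks i j)
    (hKs_col : ∀ j, ∑ i, Ks i j = 0) :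
    (∀ i j, i ≠ j → 0 ≤ (L * Ks * Pi) i j) ∧ (∀ j, ∑ i, (L * Ks * Pi) i j = 0) := by
  have key : ∀ i j, i ≠ j → ∀ m, L i m * Pi m j = 0 := by
    intro i j hij m
    have hsum : ∑ m, L i m * Pi m j = 0 := by
      have := congrFun (congrFun hLPi i) j
      simpa [Matrix.mul_apply, Matrix.one_apply, hij] using this
    have := (Finset.sum_eq_zero_iff_of_nonneg (fun m _ =>
      mul_nonneg (hLnonneg i m) (hPinonneg m j))).mp hsum
    exact this m (Finset.mem_univ m)
  constructor
  · intro i j hij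
    rw [Matrix.mul_apply]
    apply Finset.sum_nonneg
    intro m _
    rw [Matrix.mul_apply, Finset.sum_mul]
    apply Finset.sum_nonneg
    intro k _
    rcases eq_or_ne k m with rfl | hkm
    · have h0 := key i j hij k
      have : L i k * Ks k k * Pi k j = 0 := by
        calc L i k * Ks k k * Pi k j = Ks k k * (L i k * Pi k j) := by ring
        _ = 0 := by rw [h0, mul_zero]
      exact le_of_eq this.symm
    · exact mul_nonneg (mul_nonneg (hLnonneg i k) (hKs_off k m hkm)) (hPinonneg m j)
  · intro j
    simp only [Matrix.mul_apply, Finset.sum_mul]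
    rw [Finset.sum_comm]
    refine Finset.sum_eq_zero fun m _ => ?_
    rw [Finset.sum_comm]
    have h1 : ∀ k, ∑ i, L i k * Ks k m * Pi m j = Ks k m * Pi m j := by
      intro k
      rw [← Finset.sum_mul, ← Finset.sum_mul, hLcol k, one_mul]
    rw [Finset.sum_congr rfl fun k _ => h1 k, ← Finset.sum_mul, hKs_col, zero_mul]
end

section
/- For the process ∅ →^{k₁} A →^{k₂} ∅ with generating function G(s,t) = (1 + (s−1)e^{−k₂t}) exp((k₁/k₂)(s−1)(1−e^{−k₂t})), the probabilities p_n(t) converge as t → ∞ to the Poisson distribution p_n = (1/n!)(k₁/k₂)^n exp(−k₁/k₂). -/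
/-!
Writing `e = exp (-k₂ t)` and `c = k₁ / k₂`, the function `s ↦ G s t` is an affine function times
`exp (c (1 - e) (s - 1))`, so its `n`-th derivative is explicit and its value at `s = 0` is a
continuous function of `e`. As `t → ∞`, `e → 0` and this value tends to `c ^ n * exp (-c)`,
the `n`-th derivative of the Poisson generating function `exp (c (s - 1))` at `0`.
-/

open Filter Topology Real

theorem iteratedDeriv_affine_mul_exp (α β m b : ℝ) (n : ℕ) :
    iteratedDeriv n (fun s => (α + β * s) * exp (m * s + b)) =
      fun s => ((α + β * s) * m ^ n + n * β * m ^ (n - 1)) * exp (m * s + b) := by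
  induction n with
  | zero => simp
  | succ k ih =>
    rw [iteratedDeriv_succ, ih]
    funext s
    have hpoly : HasDerivAt (fun s : ℝ => (α + β * s) * m ^ k + k * β * m ^ (k - 1))
        (β * m ^ k) s := by
      simpa using ((((hasDerivAt_id s).const_mul β).const_add α).mul_const (m ^ k)).add_const
        ((k : ℝ) * β * m ^ (k - 1))
    have hexp : HasDerivAt (fun s : ℝ => exp (m * s + b)) (exp (m * s + b) * m) s := by
      simpa using (((hasDerivAt_id s).const_mul m).add_const b).exp
    rw [(hpoly.fun_mul hexp).deriv]
    rcases k with _ | j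
    · simp only [pow_zero, CharP.cast_eq_zero, zero_mul, zero_add, Nat.cast_one, one_mul,
        pow_one]
      ring
    · simp only [Nat.add_sub_cancel, Nat.cast_add, Nat.cast_one]
      ring

theorem iteratedDeriv_birthDeath_genFun_zero (c e : ℝ) (n : ℕ) :
    iteratedDeriv n (fun s => (1 + (s - 1) * e) * exp (c * (s - 1) * (1 - e))) 0 =
      ((1 - e) * (c * (1 - e)) ^ n + n * e * (c * (1 - e)) ^ (n - 1)) *
        exp (-(c * (1 - e))) := by
  have hrw : (fun s => (1 + (s - 1) * e) * exp (c * (s - 1) * (1 - e))) =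
      fun s => ((1 - e) + e * s) * exp (c * (1 - e) * s + -(c * (1 - e))) := by
    funext s
    congr 1
    · ring
    · congr 1; ring
  rw [hrw, iteratedDeriv_affine_mul_exp]
  simp

theorem tendsto_exp_neg_mul_atTop {k : ℝ} (hk : 0 < k) :
    Tendsto (fun t => exp (-k * t)) atTop (𝓝 0) :=
  tendsto_exp_atBot.comp (tendsto_id.const_mul_atTop_of_neg (neg_neg_iff_pos.mpr hk))

theorem stationary_limit_is_poisson_general (k₁ k₂ : ℝ) (hk₂ : 0 < k₂)
    (G : ℝ → ℝ → ℝ)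
    (hG : ∀ s t, G s t = (1 + (s - 1) * Real.exp (-k₂ * t)) *
      Real.exp ((k₁ / k₂) * (s - 1) * (1 - Real.exp (-k₂ * t))))
    (p : ℕ → ℝ → ℝ)
    -- p n t is the coefficient of s^n in the expansion of G(s,t) in s
    (hp : ∀ n t, p n t = iteratedDeriv n (fun s => G s t) 0 / n.factorial) :
    ∀ n : ℕ, Filter.Tendsto (fun t => p n t) Filter.atTop
      (nhds ((1 / n.factorial) * (k₁ / k₂) ^ n * Real.exp (-(k₁ / k₂)))) := by
  intro n
  set c := k₁ / k₂
  let F : ℝ → ℝ := fun e =>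
    ((1 - e) * (c * (1 - e)) ^ n + n * e * (c * (1 - e)) ^ (n - 1)) * exp (-(c * (1 - e)))
  have hpF : ∀ t, p n t = F (exp (-k₂ * t)) / n.factorial := fun t => by
    simp only [hp, hG, F, iteratedDeriv_birthDeath_genFun_zero]
  have hF : Tendsto F (𝓝 0) (𝓝 (c ^ n * exp (-c))) := by
    have hcont : Continuous F := by fun_prop
    simpa [F] using hcont.tendsto 0
  rw [show 1 / (n.factorial : ℝ) * c ^ n * exp (-c) = c ^ n * exp (-c) / n.factorial by ring]
  exact ((hF.comp (tendsto_exp_neg_mul_atTop hk₂)).div_const _).congr fun t => (hpF t).symm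

theorem stationary_limit_is_poisson (k₁ k₂ : ℝ) (hk₁ : 0 < k₁) (hk₂ : 0 < k₂)
    (G : ℝ → ℝ → ℝ)
    (hG : ∀ s t, G s t = (1 + (s - 1) * Real.exp (-k₂ * t)) *
      Real.exp ((k₁ / k₂) * (s - 1) * (1 - Real.exp (-k₂ * t))))
    (p : ℕ → ℝ → ℝ)
    -- p n t is the coefficient of s^n in the expansion of G(s,t) in s
    (hp : ∀ n t, p n t = iteratedDeriv n (fun s => G s t) 0 / n.factorial) :
    ∀ n : ℕ, Filter.Tendsto (fun t => p n t) Filter.atTop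
      (nhds ((1 / n.factorial) * (k₁ / k₂) ^ n * Real.exp (-(k₁ / k₂)))) :=
  stationary_limit_is_poisson_general k₁ k₂ hk₂ G hG p hp
end

section
/- Under the same stationarity hypothesis, the second-moment identity holds: ∑_{ℓ=1}^{r} [ ν𝓔_{(ℓ)} ⊗ E[n R_ℓ(n)] + E[n R_ℓ(n)] ⊗ ν𝓔_{(ℓ)} + (ν𝓔_{(ℓ)} ⊗ ν𝓔_{(ℓ)}) E[R_ℓ(n)] ] = 0, where ⊗ denotes the outer product of vectors in R^m. -/
lemma key_shift (m r : ℕ)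
    (νE : Matrix (Fin m) (Fin r) ℤ)
    (𝓛 : Finset (Fin m → ℤ))
    (R : Fin r → (Fin m → ℤ) → ℝ) (P : (Fin m → ℤ) → ℝ)
    (hRsupp : ∀ ℓ n, n ∉ 𝓛 → R ℓ n = 0)
    (hstat : ∀ n : Fin m → ℤ,
      ∑ ℓ, R ℓ (n - fun i => νE i ℓ) * P (n - fun i => νE i ℓ)
        = ∑ ℓ, R ℓ n * P n)
    (f : (Fin m → ℤ) → ℝ) :
    ∑ ℓ, ∑ n ∈ 𝓛, f (n + fun i => νE i ℓ) * (R ℓ n * P n)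
      = ∑ ℓ, ∑ n ∈ 𝓛, f n * (R ℓ n * P n) := by
  set B : Finset (Fin m → ℤ) :=
    𝓛 ∪ Finset.univ.biUnion (fun ℓ => 𝓛.image (· + fun i => νE i ℓ)) with hB
  have h1 : ∀ ℓ, ∑ n ∈ 𝓛, f (n + fun i => νE i ℓ) * (R ℓ n * P n)
      = ∑ n ∈ B, f n * (R ℓ (n - fun i => νE i ℓ) * P (n - fun i => νE i ℓ)) := by
    intro ℓ
    have himg : ∑ n ∈ 𝓛.image (· + fun i => νE i ℓ),
        f n * (R ℓ (n - fun i => νE i ℓ) * P (n - fun i => νE i ℓ))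
        = ∑ n ∈ 𝓛, f (n + fun i => νE i ℓ) * (R ℓ n * P n) := by
      rw [Finset.sum_image (fun a _ b _ h => by simpa using h)]
      refine Finset.sum_congr rfl fun n _ => ?_
      simp [add_sub_cancel_right]
    rw [← himg]
    refine Finset.sum_subset ?_ ?_
    · intro x hx
      exact Finset.mem_union_right _ (Finset.mem_biUnion.2 ⟨ℓ, Finset.mem_univ _, hx⟩)
    · intro x _ hx
      have : (x - fun i => νE i ℓ) ∉ 𝓛 := by
        intro hc
        exact hx (Finset.mem_image.2 ⟨_, hc, by simp [sub_add_cancel]⟩)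
      rw [hRsupp _ _ this]; ring
  calc ∑ ℓ, ∑ n ∈ 𝓛, f (n + fun i => νE i ℓ) * (R ℓ n * P n)
      = ∑ ℓ, ∑ n ∈ B, f n * (R ℓ (n - fun i => νE i ℓ) * P (n - fun i => νE i ℓ)) := by
        exact Finset.sum_congr rfl fun ℓ _ => h1 ℓ
    _ = ∑ n ∈ B, f n * ∑ ℓ, R ℓ (n - fun i => νE i ℓ) * P (n - fun i => νE i ℓ) := by
        rw [Finset.sum_comm]
        exact Finset.sum_congr rfl fun n _ => (Finset.mul_sum _ _ _).symm
    _ = ∑ n ∈ B, f n * ∑ ℓ, R ℓ n * P n := by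
        exact Finset.sum_congr rfl fun n _ => by rw [hstat]
    _ = ∑ ℓ, ∑ n ∈ B, f n * (R ℓ n * P n) := by
        rw [Finset.sum_comm]
        exact Finset.sum_congr rfl fun n _ => Finset.mul_sum _ _ _
    _ = ∑ ℓ, ∑ n ∈ 𝓛, f n * (R ℓ n * P n) := by
        refine Finset.sum_congr rfl fun ℓ _ => ?_
        refine (Finset.sum_subset (Finset.subset_union_left) ?_).symm
        intro x _ hx
        rw [hRsupp _ _ hx]; ring

theorem second_moment_identity (m r : ℕ)
    (νE : Matrix (Fin m) (Fin r) ℤ)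
    (𝓛 : Finset (Fin m → ℤ))
    (R : Fin r → (Fin m → ℤ) → ℝ) (P : (Fin m → ℤ) → ℝ)
    (hRnonneg : ∀ ℓ n, 0 ≤ R ℓ n)
    (hRsupp : ∀ ℓ n, n ∉ 𝓛 → R ℓ n = 0)
    (hPsupp : ∀ n, n ∉ 𝓛 → P n = 0)
    (hPnonneg : ∀ n, 0 ≤ P n)
    (hPsum : ∑ n ∈ 𝓛, P n = 1)
    (hclosed : ∀ n ∈ 𝓛, ∀ ℓ, 0 < R ℓ n → (n + fun i => νE i ℓ) ∈ 𝓛)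
    (hstat : ∀ n : Fin m → ℤ,
      ∑ ℓ, R ℓ (n - fun i => νE i ℓ) * P (n - fun i => νE i ℓ)
        = ∑ ℓ, R ℓ n * P n) :
    ∀ i j : Fin m,
      ∑ ℓ, ((νE i ℓ : ℝ) * (∑ n ∈ 𝓛, (n j : ℝ) * R ℓ n * P n)
        + (∑ n ∈ 𝓛, (n i : ℝ) * R ℓ n * P n) * (νE j ℓ : ℝ)
        + (νE i ℓ : ℝ) * (νE j ℓ : ℝ) * (∑ n ∈ 𝓛, R ℓ n * P n)) = 0 := by
  intro i j
  have key := key_shift m r νE 𝓛 R P hRsupp hstat (fun n => (n i : ℝ) * (n j : ℝ))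
  have h0 : ∑ ℓ, ∑ n ∈ 𝓛,
      ((((n + fun k => νE k ℓ) i : ℝ) * ((n + fun k => νE k ℓ) j : ℝ)
        - (n i : ℝ) * (n j : ℝ)) * (R ℓ n * P n)) = 0 := by
    simp only [sub_mul, Finset.sum_sub_distrib]
    rw [sub_eq_zero]
    exact key
  rw [← h0]
  refine Finset.sum_congr rfl fun ℓ _ => ?_
  rw [Finset.mul_sum, Finset.sum_mul, Finset.mul_sum, ← Finset.sum_add_distrib,
    ← Finset.sum_add_distrib]
  refine Finset.sum_congr rfl fun n _ => ?_
  simp only [Pi.add_apply]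
  push_cast
  ring
end
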